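/- arXiv:2409.09410 — 2 statements merged into one kernel-verified Lean document; each statement's English description precedes it below -/
import Mathlib

section
/- Let d, m, r, N be natural numbers, let F be an invertible d×d real matrix, and let A be the (d+m)×(d+m) block-diagonal matrix diag(F, I_m). For each s = 0, …, N let G_s be an r×d real matrix, J_s an m×d real matrix, and K_s an m×m real matrix, and set H_s = [[G_s, 0_{r×m}],[J_s, K_s]]. If the stacked matrix with row blocks G_s · F^s for s = 0, …, N has rank d, and K_{s₀} is invertible for some s₀ ≤ N, then the stacked matrix with row blocks H_s · A^s for s = 0, …, N has rank d+m (full column rank). -/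
open Matrix

lemma rank_eq_card_iff_ker {ι n : Type*} [Fintype ι] [Fintype n] [DecidableEq n]
    (M : Matrix ι n ℝ) :
    M.rank = Fintype.card n ↔ LinearMap.ker M.mulVecLin = ⊥ := by
  have h := M.mulVecLin.finrank_range_add_finrank_ker
  rw [Module.finrank_fintype_fun_eq_card] at h
  constructor
  · intro hr
    rw [Matrix.rank] at hr
    rw [hr] at h
    have : Module.finrank ℝ (LinearMap.ker M.mulVecLin) = 0 := by omega
    exact Submodule.finrank_eq_zero.mp this
  · intro hk
    rw [Matrix.rank]
    rw [hk] at h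
    simpa using h

/-- paper's Lemma 1 for the AUBS: with `A = diag(F, I_m)` for an
invertible `F`, and row blocks `H_s = [[G_s, 0], [J_s, K_s]]`, if the stacked
matrix of the blocks `G_s * F^s` has rank `d` and some `K_{s₀}` is invertible,
then the stacked matrix of the blocks `H_s * A^s` has full column rank `d + m`. -/
theorem joint_observability_full_column_rank
    (d m r N : ℕ)
    (F : Matrix (Fin d) (Fin d) ℝ) (hF : IsUnit F)
    (G : Fin (N + 1) → Matrix (Fin r) (Fin d) ℝ)
    (J : Fin (N + 1) → Matrix (Fin m) (Fin d) ℝ)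
    (K : Fin (N + 1) → Matrix (Fin m) (Fin m) ℝ)
    (A : Matrix (Fin d ⊕ Fin m) (Fin d ⊕ Fin m) ℝ)
    (hA : A = Matrix.fromBlocks F 0 0 (1 : Matrix (Fin m) (Fin m) ℝ))
    (H : Fin (N + 1) → Matrix (Fin r ⊕ Fin m) (Fin d ⊕ Fin m) ℝ)
    (hH : ∀ s, H s = Matrix.fromBlocks (G s) 0 (J s) (K s))
    (hGF : (Matrix.of fun (si : Fin (N + 1) × Fin r) (j : Fin d) =>
        (G si.1 * F ^ (si.1 : ℕ)) si.2 j).rank = d)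
    (hK : ∃ s₀ : Fin (N + 1), IsUnit (K s₀)) :
    (Matrix.of fun (si : Fin (N + 1) × (Fin r ⊕ Fin m)) (j : Fin d ⊕ Fin m) =>
        (H si.1 * A ^ (si.1 : ℕ)) si.2 j).rank = d + m := by
  obtain ⟨s₀, hKs₀⟩ := hK
  -- A^s = fromBlocks F^s 0 0 1
  have hApow : ∀ s : ℕ, A ^ s = Matrix.fromBlocks (F ^ s) 0 0 (1 : Matrix (Fin m) (Fin m) ℝ) := by
    intro s
    induction s with
    | zero => simp [Matrix.fromBlocks_one]
    | succ k ih =>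
      rw [pow_succ, ih, hA, Matrix.fromBlocks_multiply, pow_succ]
      simp
  -- GF kernel trivial
  have hGFker : LinearMap.ker (Matrix.of fun (si : Fin (N + 1) × Fin r) (j : Fin d) =>
      (G si.1 * F ^ (si.1 : ℕ)) si.2 j).mulVecLin = ⊥ := by
    rw [← rank_eq_card_iff_ker]
    simpa using hGF
  rw [show d + m = Fintype.card (Fin d ⊕ Fin m) by simp, rank_eq_card_iff_ker]
  rw [LinearMap.ker_eq_bot']
  intro v hv
  set x : Fin d → ℝ := v ∘ Sum.inl with hx
  set y : Fin m → ℝ := v ∘ Sum.inr with hy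
  have hvelim : v = Sum.elim x y := by
    funext i; cases i <;> rfl
  have hrow : ∀ (s : Fin (N + 1)) (i : Fin r ⊕ Fin m),
      ((H s * A ^ (s : ℕ)) *ᵥ v) i = 0 := by
    intro s i
    have := congrFun hv (s, i)
    simpa [Matrix.mulVecLin_apply, Matrix.mulVec, dotProduct] using this
  have hHA : ∀ s : Fin (N + 1), H s * A ^ (s : ℕ) =
      Matrix.fromBlocks (G s * F ^ (s : ℕ)) 0 (J s * F ^ (s : ℕ)) (K s) := by
    intro s
    rw [hH, hApow, Matrix.fromBlocks_multiply]
    simp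
  -- x = 0
  have hx0 : x = 0 := by
    have hker : (Matrix.of fun (si : Fin (N + 1) × Fin r) (j : Fin d) =>
        (G si.1 * F ^ (si.1 : ℕ)) si.2 j).mulVecLin x = 0 := by
      funext si
      obtain ⟨s, i⟩ := si
      have h1 := hrow s (Sum.inl i)
      rw [hHA, hvelim, Matrix.fromBlocks_mulVec] at h1
      simp only [Sum.elim_inl, Sum.elim_comp_inl, Sum.elim_comp_inr,
        Matrix.zero_mulVec, add_zero] at h1
      simpa [Matrix.mulVecLin_apply, Matrix.mulVec, dotProduct] using h1
    exact LinearMap.ker_eq_bot'.mp hGFker x hker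
  -- y = 0
  have hy0 : y = 0 := by
    have hKmul : K s₀ *ᵥ y = 0 := by
      funext i
      have h1 := hrow s₀ (Sum.inr i)
      rw [hHA, hvelim, Matrix.fromBlocks_mulVec] at h1
      simp only [Sum.elim_inr, Sum.elim_comp_inl, Sum.elim_comp_inr, hx0,
        Matrix.mulVec_zero, zero_add] at h1
      simpa using h1
    have hinj := Matrix.mulVec_injective_iff_isUnit.mpr hKs₀
    have := hinj (a₁ := y) (a₂ := 0) (by simpa using hKmul)
    exact this
  rw [hvelim, hx0, hy0]
  simp
end

section
/- Let A be a real n×n matrix, Q a real symmetric positive definite n×n matrix, and for each time k ≥ 1 let γ_k ∈ (0, 1] and let S(k) be a real symmetric positive semidefinite n×n matrix. Let Π̂(0) and P̂(0) be real symmetric positive definite matrices with P̂(0) ≼ Π̂(0). Define recursively Π̄(k) = A Π̂(k−1) Aᵀ + Q and Π̂(k) = (γ_k Π̄(k)⁻¹ + S(k))⁻¹. Suppose P̄(k) and P̂(k) are sequences of real symmetric positive definite matrices satisfying, for every k ≥ 1, P̄(k) ≼ A P̂(k−1) Aᵀ + Q and P̂(k)⁻¹ ≽ γ_k P̄(k)⁻¹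 + S(k). Then for all k ≥ 0, P̂(k) ≼ Π̂(k), and for all k ≥ 1, P̄(k) ≼ Π̄(k). -/
/-!
Both recursions are compositions of two Loewner-monotone maps. The prediction
`P ↦ A P Aᵀ + Q` is monotone because congruence preserves positive semidefiniteness,
and the information-form update `P ↦ (γ P⁻¹ + S)⁻¹` is monotone for `γ > 0` because
matrix inversion is antitone on positive definite matrices and is applied twice.
Domination of `P̂` by `Π̂` therefore propagates from step `k - 1` to step `k`,
with `P̄(k) ≼ Π̄(k)` as the intermediate stage.
-/

open Matrix
open scoped MatrixOrder ComplexOrder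

namespace Matrix

variable {𝕜 m n : Type*} [RCLike 𝕜]

lemma PosDef.of_le {A B : Matrix n n 𝕜} (hA : A.PosDef) (hAB : A ≤ B) : B.PosDef := by
  simpa using hA.add_posSemidef hAB

variable [Fintype n]

lemma mul_mul_conjTranspose_le_mul_mul_conjTranspose [Finite m] {P P' : Matrix n n 𝕜}
    (h : P ≤ P') (B : Matrix m n 𝕜) : B * P * Bᴴ ≤ B * P' * Bᴴ := by
  rw [le_iff, ← Matrix.sub_mul, ← Matrix.mul_sub]
  exact (le_iff.mp h).mul_mul_conjTranspose_same B

variable [DecidableEq n]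

lemma PosDef.inv_le_inv {A B : Matrix n n 𝕜} (hA : A.PosDef) (hAB : A ≤ B) : B⁻¹ ≤ A⁻¹ := by
  have hB := hA.of_le hAB
  have hAu : IsUnit A.det := (isUnit_iff_isUnit_det A).mp hA.isUnit
  have hBu : IsUnit B.det := (isUnit_iff_isUnit_det B).mp hB.isUnit
  have hCH : (A⁻¹ - B⁻¹).IsHermitian := hA.isHermitian.inv.sub hB.isHermitian.inv
  -- `A⁻¹ - B⁻¹` is a sum of two congruences, of `A` and of `B - A`.
  have key : A⁻¹ - B⁻¹ =
      (A⁻¹ - B⁻¹) * A * (A⁻¹ - B⁻¹)ᴴ + B⁻¹ * (B - A) * (B⁻¹)ᴴ := by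
    rw [hCH.eq, hB.isHermitian.inv.eq]
    simp only [Matrix.sub_mul, Matrix.mul_sub, Matrix.mul_assoc,
      nonsing_inv_mul_cancel_left _ _ hAu,
      mul_nonsing_inv _ hAu, mul_nonsing_inv _ hBu, Matrix.mul_one]
    abel
  rw [le_iff, key]
  exact (hA.posSemidef.mul_mul_conjTranspose_same _).add
    ((le_iff.mp hAB).mul_mul_conjTranspose_same _)

lemma le_inv_of_inv_le {P R : Matrix n n 𝕜} (hP : P.PosDef) (hR : R.PosDef) (h : R ≤ P⁻¹) :
    P ≤ R⁻¹ := by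
  simpa only [nonsing_inv_nonsing_inv P ((isUnit_iff_isUnit_det P).mp hP.isUnit)]
    using hR.inv_le_inv h

lemma le_inv_smul_inv_add_of_le {γ : ℝ} (hγ : 0 < γ) {S P P' R : Matrix n n 𝕜}
    (hS : S.PosSemidef) (hP : P.PosDef) (hR : R.PosDef) (hPP' : P ≤ P')
    (hPR : γ • P⁻¹ + S ≤ R⁻¹) : R ≤ (γ • P'⁻¹ + S)⁻¹ := by
  have hinv : γ • P'⁻¹ + S ≤ γ • P⁻¹ + S :=
    add_le_add_left (smul_le_smul_of_nonneg_left (hP.inv_le_inv hPP') hγ.le) S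
  refine le_inv_of_inv_le hR ?_ (hinv.trans hPR)
  exact ((hP.of_le hPP').inv.smul hγ).add_posSemidef hS

end Matrix

lemma Matrix.le_mul_mul_transpose_add_of_le {n : Type*} [Fintype n] {A Q R P P' : Matrix n n ℝ}
    (hR : R ≤ A * P * Aᵀ + Q) (hPP' : P ≤ P') : R ≤ A * P' * Aᵀ + Q := by
  rw [← conjTranspose_eq_transpose_of_trivial] at hR ⊢
  exact hR.trans (add_le_add_left (mul_mul_conjTranspose_le_mul_mul_conjTranspose hPP' A) Q)

theorem lemma2_covariance_recursion_general
    (n : ℕ) (A Q : Matrix (Fin n) (Fin n) ℝ)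
    (γ : ℕ → ℝ) (hγ0 : ∀ k, 1 ≤ k → 0 < γ k)
    (S : ℕ → Matrix (Fin n) (Fin n) ℝ) (hS : ∀ k, 1 ≤ k → (S k).PosSemidef)
    (Pihat Pibar : ℕ → Matrix (Fin n) (Fin n) ℝ)
    (hPibar_def : ∀ k, 1 ≤ k → Pibar k = A * Pihat (k - 1) * Aᵀ + Q)
    (hPihat_def : ∀ k, 1 ≤ k → Pihat k = (γ k • (Pibar k)⁻¹ + S k)⁻¹)
    (Phat Pbar : ℕ → Matrix (Fin n) (Fin n) ℝ)
    (hPhat : ∀ k, (Phat k).PosDef)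
    (hPbar : ∀ k, 1 ≤ k → (Pbar k).PosDef)
    (hinit : (Pihat 0 - Phat 0).PosSemidef)
    (hPbar_le : ∀ k, 1 ≤ k → ((A * Phat (k - 1) * Aᵀ + Q) - Pbar k).PosSemidef)
    (hPhat_le : ∀ k, 1 ≤ k → ((Phat k)⁻¹ - (γ k • (Pbar k)⁻¹ + S k)).PosSemidef) :
    (∀ k, (Pihat k - Phat k).PosSemidef) ∧
    (∀ k, 1 ≤ k → (Pibar k - Pbar k).PosSemidef) := by
  have bar_of_hat (k : ℕ) (hk : 1 ≤ k) (hhat : Phat (k - 1) ≤ Pihat (k - 1)) :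
      Pbar k ≤ Pibar k :=
    hPibar_def k hk ▸ le_mul_mul_transpose_add_of_le (hPbar_le k hk) hhat
  have hat (k : ℕ) : Phat k ≤ Pihat k := by
    induction k with
    | zero => exact hinit
    | succ k ih =>
      have hk : 1 ≤ k + 1 := Nat.le_add_left 1 k
      rw [hPihat_def _ hk]
      exact le_inv_smul_inv_add_of_le (hγ0 _ hk) (hS _ hk) (hPbar _ hk) (hPhat _)
        (bar_of_hat _ hk ih) (hPhat_le _ hk)
  exact ⟨hat, fun k hk => bar_of_hat k hk (hat _)⟩

/-- paper's Lemma 2 as a deterministic matrix recursion: the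
auxiliary upper bound system covariances
`Π̄(k) = A Π̂(k−1) Aᵀ + Q`, `Π̂(k) = (γ_k Π̄(k)⁻¹ + S(k))⁻¹`
dominate, in the Loewner order, any positive definite sequences `P̄(k)`, `P̂(k)`
satisfying `P̄(k) ≼ A P̂(k−1) Aᵀ + Q` and `P̂(k)⁻¹ ≽ γ_k P̄(k)⁻¹ + S(k)`,
provided `P̂(0) ≼ Π̂(0)`. -/
theorem lemma2_covariance_recursion
    (n : ℕ) (A Q : Matrix (Fin n) (Fin n) ℝ) (hQ : Q.PosDef)
    (γ : ℕ → ℝ) (hγ0 : ∀ k, 1 ≤ k → 0 < γ k) (hγ1 : ∀ k, 1 ≤ k → γ k ≤ 1)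
    (S : ℕ → Matrix (Fin n) (Fin n) ℝ) (hS : ∀ k, 1 ≤ k → (S k).PosSemidef)
    (Pihat Pibar : ℕ → Matrix (Fin n) (Fin n) ℝ)
    (hPihat0 : (Pihat 0).PosDef)
    (hPibar_def : ∀ k, 1 ≤ k → Pibar k = A * Pihat (k - 1) * Aᵀ + Q)
    (hPihat_def : ∀ k, 1 ≤ k → Pihat k = (γ k • (Pibar k)⁻¹ + S k)⁻¹)
    (Phat Pbar : ℕ → Matrix (Fin n) (Fin n) ℝ)
    (hPhat : ∀ k, (Phat k).PosDef)
    (hPbar : ∀ k, 1 ≤ k → (Pbar k).PosDef)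
    (hinit : (Pihat 0 - Phat 0).PosSemidef)
    (hPbar_le : ∀ k, 1 ≤ k → ((A * Phat (k - 1) * Aᵀ + Q) - Pbar k).PosSemidef)
    (hPhat_le : ∀ k, 1 ≤ k → ((Phat k)⁻¹ - (γ k • (Pbar k)⁻¹ + S k)).PosSemidef) :
    (∀ k, (Pihat k - Phat k).PosSemidef) ∧
    (∀ k, 1 ≤ k → (Pibar k - Pbar k).PosSemidef) :=
  lemma2_covariance_recursion_general n A Q γ hγ0 S hS Pihat Pibar hPibar_def hPihat_def Phat Pbar
    hPhat hPbar hinit hPbar_le hPhat_le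
end
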